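/- Let n ≥ 3. There exists a permutation f of {1, 2, ..., n} such that i ↦ |f(i) − i| is a bijection from {1, ..., n} onto {0, 1, ..., n−1} if and only if there exists a bijection g from {2, 3, ..., n−1} onto {2, 3, ..., n} \ {n−1} such that i ↦ |g(i) − i| is a bijection from {2, ..., n−1} onto {0, 1, ..., n−3}. -/
import Mathlib

open Set Function

private lemma nat_dist_def (a b : ℕ) : Nat.dist a b = a - b + (b - a) := rfl

/-- A Toeplitz solution. -/
def TSol (n : ℕ) (f : ℕ → ℕ) : Prop :=
  Set.BijOn f (Set.Icc 1 n) (Set.Icc 1 n) ∧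
    Set.BijOn (fun i => Nat.dist (f i) i) (Set.Icc 1 n) (Set.Ico 0 n)

private lemma rho_bijOn (n : ℕ) :
    Set.BijOn (fun i => n + 1 - i) (Set.Icc 1 n) (Set.Icc 1 n) := by
  refine ⟨?_, ?_, ?_⟩
  · intro x hx; simp only [Set.mem_Icc] at *; omega
  · intro a ha b hb h; simp only [Set.mem_Icc] at *; omega
  · intro y hy
    simp only [Set.mem_Icc] at hy
    exact ⟨n + 1 - y, by simp only [Set.mem_Icc]; omega,
      by show n + 1 - (n + 1 - y) = y; omega⟩

private lemma flip_sol {n : ℕ} {f : ℕ → ℕ} (h : TSol n f) :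
    TSol n (fun i => n + 1 - f (n + 1 - i)) := by
  obtain ⟨hb, hd⟩ := h
  have hrho := rho_bijOn n
  constructor
  · exact (hrho.comp hb).comp hrho
  · have heq : Set.EqOn ((fun i => Nat.dist (f i) i) ∘ (fun i => n + 1 - i))
        (fun i => Nat.dist (n + 1 - f (n + 1 - i)) i) (Set.Icc 1 n) := by
      intro i hi
      simp only [Set.mem_Icc] at hi
      have h1 : f (n + 1 - i) ∈ Set.Icc 1 n :=
        hb.mapsTo (by simp only [Set.mem_Icc]; omega)
      simp only [Set.mem_Icc] at h1
      simp only [Function.comp_apply, nat_dist_def]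
      omega
    exact (hd.comp hrho).congr heq

private lemma inv_sol {n : ℕ} {f : ℕ → ℕ} (h : TSol n f) :
    TSol n (Function.invFunOn f (Set.Icc 1 n)) := by
  obtain ⟨hb, hd⟩ := h
  set f' := Function.invFunOn f (Set.Icc 1 n) with hf'
  have hinvon := hb.invOn_invFunOn
  have hbi : Set.BijOn f' (Set.Icc 1 n) (Set.Icc 1 n) :=
    Set.BijOn.symm hinvon.symm hb
  refine ⟨hbi, ?_⟩
  have heq : Set.EqOn ((fun i => Nat.dist (f i) i) ∘ f')
      (fun j => Nat.dist (f' j) j) (Set.Icc 1 n) := by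
    intro j hj
    have h1 : f (f' j) = j := hinvon.2 hj
    simp only [Function.comp_apply, h1]
    exact Nat.dist_comm j (f' j)
  exact (hd.comp hbi).congr heq

private lemma invFunOn_eq_of_eq {n : ℕ} {f : ℕ → ℕ}
    (hb : Set.BijOn f (Set.Icc 1 n) (Set.Icc 1 n))
    {x y : ℕ} (hx : x ∈ Set.Icc 1 n) (hxy : f x = y) :
    Function.invFunOn f (Set.Icc 1 n) y = x := by
  subst hxy
  exact hb.injOn.leftInvOn_invFunOn hx

/-- Normalization: any solution yields one with F 1 = n - 1 and F n = 1. -/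
private lemma norm_sol {n : ℕ} (hn : 3 ≤ n) {f : ℕ → ℕ} (h : TSol n f) :
    ∃ F : ℕ → ℕ, TSol n F ∧ F 1 = n - 1 ∧ F n = 1 := by
  obtain ⟨hb, hd⟩ := h
  have m1 : (1 : ℕ) ∈ Set.Icc 1 n := by simp only [Set.mem_Icc]; omega
  have m2 : (2 : ℕ) ∈ Set.Icc 1 n := by simp only [Set.mem_Icc]; omega
  have mn : n ∈ Set.Icc 1 n := by simp only [Set.mem_Icc]; omega
  have mn1 : n - 1 ∈ Set.Icc 1 n := by simp only [Set.mem_Icc]; omega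
  obtain ⟨i, hi, hdi⟩ := hd.surjOn (show n - 1 ∈ Set.Ico 0 n by
    simp only [Set.mem_Ico]; omega)
  obtain ⟨j, hj, hdj⟩ := hd.surjOn (show n - 2 ∈ Set.Ico 0 n by
    simp only [Set.mem_Ico]; omega)
  have hi' := hi; have hj' := hj
  simp only [Set.mem_Icc] at hi' hj'
  have hfi := hb.mapsTo hi
  have hfj := hb.mapsTo hj
  simp only [Set.mem_Icc] at hfi hfj
  simp only [nat_dist_def] at hdi hdj
  have hcasei : (i = 1 ∧ f i = n) ∨ (i = n ∧ f i = 1) := by omega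
  have hcasej : (j = 1 ∧ f j = n - 1) ∨ (j = 2 ∧ f j = n) ∨
      (j = n - 1 ∧ f j = 1) ∨ (j = n ∧ f j = 2) := by omega
  rcases hcasei with ⟨hi1, hfi1⟩ | ⟨hin, hfin⟩
  · -- f 1 = n
    have hf1 : f 1 = n := by rw [← hi1]; exact hfi1
    rcases hcasej with ⟨hj1, hfj1⟩ | ⟨hj2, hfj2⟩ | ⟨hjn1, hfjn1⟩ | ⟨hjn, hfjn⟩
    · exfalso; rw [hj1] at hfj1; omega
    · exfalso
      rw [hj2] at hfj2
      have := hb.injOn m2 m1 (by rw [hfj2, hf1])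
      omega
    · -- f (n-1) = 1 : take the inverse
      refine ⟨Function.invFunOn f (Set.Icc 1 n), inv_sol ⟨hb, hd⟩, ?_, ?_⟩
      · rw [invFunOn_eq_of_eq hb hj hfjn1, hjn1]
      · exact invFunOn_eq_of_eq hb m1 hf1
    · -- f n = 2 : take the flip
      rw [hjn] at hfjn
      refine ⟨fun i => n + 1 - f (n + 1 - i), flip_sol ⟨hb, hd⟩, ?_, ?_⟩
      · show n + 1 - f (n + 1 - 1) = n - 1
        rw [show n + 1 - 1 = n from by omega, hfjn]; omega
      · show n + 1 - f (n + 1 - n) = 1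
        rw [show n + 1 - n = 1 from by omega, hf1]
        omega
  · -- f n = 1
    have hfn : f n = 1 := by rw [← hin]; exact hfin
    rcases hcasej with ⟨hj1, hfj1⟩ | ⟨hj2, hfj2⟩ | ⟨hjn1, hfjn1⟩ | ⟨hjn, hfjn⟩
    · -- f 1 = n - 1 : done
      rw [hj1] at hfj1
      exact ⟨f, ⟨hb, hd⟩, hfj1, hfn⟩
    · -- f 2 = n : flip of inverse
      rw [hj2] at hfj2
      set f' := Function.invFunOn f (Set.Icc 1 n) with hf'
      have hsol' : TSol n f' := inv_sol ⟨hb, hd⟩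
      have h2 : f' n = 2 := invFunOn_eq_of_eq hb m2 hfj2
      have h1 : f' 1 = n := invFunOn_eq_of_eq hb mn hfn
      refine ⟨fun i => n + 1 - f' (n + 1 - i), flip_sol hsol', ?_, ?_⟩
      · show n + 1 - f' (n + 1 - 1) = n - 1
        rw [show n + 1 - 1 = n from by omega, h2]; omega
      · show n + 1 - f' (n + 1 - n) = 1
        rw [show n + 1 - n = 1 from by omega, h1]
        omega
    · exfalso
      have := hb.injOn hj mn (by rw [hfjn1, hfn])
      omega
    · exfalso; rw [hjn] at hfjn; omega

/-- Restriction: a normalized solution restricts to a T** solution. -/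
private lemma restrict_sol {n : ℕ} (hn : 3 ≤ n) {f : ℕ → ℕ} (h : TSol n f)
    (h1 : f 1 = n - 1) (h2 : f n = 1) :
    Set.BijOn f (Set.Icc 2 (n - 1)) (Set.Icc 2 n \ {n - 1}) ∧
      Set.BijOn (fun i => Nat.dist (f i) i) (Set.Icc 2 (n - 1)) (Set.Ico 0 (n - 2)) := by
  obtain ⟨hb, hd⟩ := h
  have h1' : 1 ∈ Set.Icc 1 n := by simp only [Set.mem_Icc]; omega
  have hn' : n ∈ Set.Icc 1 n := by simp only [Set.mem_Icc]; omega
  have hsub : Set.Icc 2 (n - 1) ⊆ Set.Icc 1 n := by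
    intro x hx; simp only [Set.mem_Icc] at *; omega
  constructor
  · refine ⟨?_, ?_, ?_⟩
    · intro x hx
      have hxm := hsub hx
      have hfx := hb.mapsTo hxm
      simp only [Set.mem_Icc] at hx hfx
      have hxm' := hxm; simp only [Set.mem_Icc] at hxm'
      simp only [Set.mem_diff, Set.mem_Icc, Set.mem_singleton_iff]
      refine ⟨⟨?_, hfx.2⟩, ?_⟩
      · rcases Nat.lt_or_ge (f x) 2 with hlt | hge
        · exfalso
          have hfx1 : f x = 1 := by omega
          have := hb.injOn hxm hn' (by rw [hfx1, h2])
          omega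
        · exact hge
      · intro heq
        have := hb.injOn hxm h1' (by rw [heq, h1])
        omega
    · exact hb.injOn.mono hsub
    · intro y hy
      simp only [Set.mem_diff, Set.mem_Icc, Set.mem_singleton_iff] at hy
      obtain ⟨x, hx, hfx⟩ := hb.surjOn (show y ∈ Set.Icc 1 n by
        simp only [Set.mem_Icc]; omega)
      have hx' := hx; simp only [Set.mem_Icc] at hx'
      refine ⟨x, ?_, hfx⟩
      simp only [Set.mem_Icc]
      constructor
      · rcases Nat.lt_or_ge x 2 with hlt | hge
        · exfalso; have hx1 : x = 1 := by omega
          rw [hx1, h1] at hfx; omega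
        · exact hge
      · rcases Nat.lt_or_ge x n with hlt | hge
        · omega
        · exfalso; have hxn : x = n := by omega
          rw [hxn, h2] at hfx; omega
  · have hD1 : Nat.dist (f 1) 1 = n - 2 := by rw [h1, nat_dist_def]; omega
    have hDn : Nat.dist (f n) n = n - 1 := by rw [h2, nat_dist_def]; omega
    refine ⟨?_, ?_, ?_⟩
    · intro x hx
      have hxm := hsub hx
      have hDx := hd.mapsTo hxm
      have hxm' := hxm; simp only [Set.mem_Icc] at hx hxm'
      simp only [Set.mem_Ico] at hDx ⊢
      refine ⟨Nat.zero_le _, ?_⟩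
      rcases Nat.lt_or_ge (Nat.dist (f x) x) (n - 2) with hlt | hge
      · exact hlt
      · exfalso
        rcases Nat.lt_or_ge (Nat.dist (f x) x) (n - 1) with hlt2 | hge2
        · have heq : Nat.dist (f x) x = n - 2 := by omega
          have : x = 1 := hd.injOn hxm h1' (by show Nat.dist (f x) x = Nat.dist (f 1) 1; rw [heq, hD1])
          omega
        · have heq : Nat.dist (f x) x = n - 1 := by omega
          have : x = n := hd.injOn hxm hn' (by show Nat.dist (f x) x = Nat.dist (f n) n; rw [heq, hDn])
          omega
    · exact hd.injOn.mono hsub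
    · intro d hdm
      simp only [Set.mem_Ico] at hdm
      obtain ⟨x, hx, hDx⟩ := hd.surjOn (show d ∈ Set.Ico 0 n by
        simp only [Set.mem_Ico]; omega)
      have hx' := hx; simp only [Set.mem_Icc] at hx'
      have hDx' : Nat.dist (f x) x = d := hDx
      refine ⟨x, ?_, hDx⟩
      simp only [Set.mem_Icc]
      constructor
      · rcases Nat.lt_or_ge x 2 with hlt | hge
        · exfalso; have hx1 : x = 1 := by omega
          rw [hx1, hD1] at hDx'; omega
        · exact hge
      · rcases Nat.lt_or_ge x n with hlt | hge
        · omega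
        · exfalso; have hxn : x = n := by omega
          rw [hxn, hDn] at hDx'; omega

/-- Extension: a T** solution extends to a Toeplitz solution. -/
private lemma extend_sol {n : ℕ} (hn : 3 ≤ n) {g : ℕ → ℕ}
    (hb : Set.BijOn g (Set.Icc 2 (n - 1)) (Set.Icc 2 n \ {n - 1}))
    (hd : Set.BijOn (fun i => Nat.dist (g i) i) (Set.Icc 2 (n - 1)) (Set.Ico 0 (n - 2))) :
    TSol n (fun i => if i = 1 then n - 1 else if i = n then 1 else g i) := by
  set f := fun i => if i = 1 then n - 1 else if i = n then 1 else g i with hf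
  have hfone : f 1 = n - 1 := by simp [hf]
  have hfn : f n = 1 := by
    have hne : n ≠ 1 := by omega
    simp [hf, hne]
  have hfval : ∀ x ∈ Set.Icc 2 (n - 1), f x = g x := by
    intro x hx; simp only [Set.mem_Icc] at hx
    simp only [hf]; rw [if_neg (by omega), if_neg (by omega)]
  have hgmem : ∀ x ∈ Set.Icc 2 (n - 1), 2 ≤ g x ∧ g x ≤ n ∧ g x ≠ n - 1 := by
    intro x hx
    have := hb.mapsTo hx
    simp only [Set.mem_diff, Set.mem_Icc, Set.mem_singleton_iff] at this
    exact ⟨this.1.1, this.1.2, this.2⟩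
  have hdmem : ∀ x ∈ Set.Icc 2 (n - 1), Nat.dist (g x) x < n - 2 := by
    intro x hx
    have := hd.mapsTo hx
    simp only [Set.mem_Ico] at this
    exact this.2
  have hD1 : Nat.dist (f 1) 1 = n - 2 := by rw [hfone, nat_dist_def]; omega
  have hDn : Nat.dist (f n) n = n - 1 := by rw [hfn, nat_dist_def]; omega
  constructor
  · refine ⟨?_, ?_, ?_⟩
    · intro x hx
      simp only [Set.mem_Icc] at hx ⊢
      by_cases hx1 : x = 1
      · rw [hx1, hfone]; omega
      · by_cases hxn : x = n
        · rw [hxn, hfn]; omega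
        · have hxm : x ∈ Set.Icc 2 (n - 1) := by simp only [Set.mem_Icc]; omega
          rw [hfval x hxm]
          have := hgmem x hxm; omega
    · intro a ha b hb' heq
      simp only [Set.mem_Icc] at ha hb'
      by_cases ha1 : a = 1 <;> by_cases hb1 : b = 1
      · omega
      · exfalso
        rw [ha1, hfone] at heq
        by_cases hbn : b = n
        · rw [hbn, hfn] at heq; omega
        · have hbm : b ∈ Set.Icc 2 (n - 1) := by simp only [Set.mem_Icc]; omega
          rw [hfval b hbm] at heq
          have := hgmem b hbm; omega
      · exfalso
        rw [hb1, hfone] at heq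
        by_cases han : a = n
        · rw [han, hfn] at heq; omega
        · have ham : a ∈ Set.Icc 2 (n - 1) := by simp only [Set.mem_Icc]; omega
          rw [hfval a ham] at heq
          have := hgmem a ham; omega
      · by_cases han : a = n <;> by_cases hbn : b = n
        · omega
        · exfalso
          rw [han, hfn] at heq
          have hbm : b ∈ Set.Icc 2 (n - 1) := by simp only [Set.mem_Icc]; omega
          rw [hfval b hbm] at heq
          have := hgmem b hbm; omega
        · exfalso
          rw [hbn, hfn] at heq
          have ham : a ∈ Set.Icc 2 (n - 1) := by simp only [Set.mem_Icc]; omega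
          rw [hfval a ham] at heq
          have := hgmem a ham; omega
        · have ham : a ∈ Set.Icc 2 (n - 1) := by simp only [Set.mem_Icc]; omega
          have hbm : b ∈ Set.Icc 2 (n - 1) := by simp only [Set.mem_Icc]; omega
          rw [hfval a ham, hfval b hbm] at heq
          exact hb.injOn ham hbm heq
    · intro y hy
      simp only [Set.mem_Icc] at hy
      by_cases hy1 : y = n - 1
      · exact ⟨1, by simp only [Set.mem_Icc]; omega, by rw [hfone, hy1]⟩
      · by_cases hyn : y = 1
        · exact ⟨n, by simp only [Set.mem_Icc]; omega, by rw [hfn, hyn]⟩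
        · obtain ⟨x, hx, hgx⟩ := hb.surjOn (show y ∈ Set.Icc 2 n \ {n - 1} by
            simp only [Set.mem_diff, Set.mem_Icc, Set.mem_singleton_iff]; omega)
          refine ⟨x, ?_, ?_⟩
          · have := hx; simp only [Set.mem_Icc] at this ⊢; omega
          · rw [hfval x hx]; exact hgx
  · refine ⟨?_, ?_, ?_⟩
    · intro x hx
      simp only [Set.mem_Icc] at hx
      show Nat.dist (f x) x ∈ Set.Ico 0 n
      simp only [Set.mem_Ico]
      by_cases hx1 : x = 1
      · rw [hx1, hD1]; omega
      · by_cases hxn : x = n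
        · rw [hxn, hDn]; omega
        · have hxm : x ∈ Set.Icc 2 (n - 1) := by simp only [Set.mem_Icc]; omega
          rw [hfval x hxm]
          have := hdmem x hxm; omega
    · intro a ha b hb' heq
      simp only [Set.mem_Icc] at ha hb'
      have heq' : Nat.dist (f a) a = Nat.dist (f b) b := heq
      clear heq
      by_cases ha1 : a = 1 <;> by_cases hb1 : b = 1
      · omega
      · exfalso
        rw [ha1, hD1] at heq'
        by_cases hbn : b = n
        · rw [hbn, hDn] at heq'; omega
        · have hbm : b ∈ Set.Icc 2 (n - 1) := by simp only [Set.mem_Icc]; omega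
          rw [hfval b hbm] at heq'
          have := hdmem b hbm; omega
      · exfalso
        rw [hb1, hD1] at heq'
        by_cases han : a = n
        · rw [han, hDn] at heq'; omega
        · have ham : a ∈ Set.Icc 2 (n - 1) := by simp only [Set.mem_Icc]; omega
          rw [hfval a ham] at heq'
          have := hdmem a ham; omega
      · by_cases han : a = n <;> by_cases hbn : b = n
        · omega
        · exfalso
          rw [han, hDn] at heq'
          have hbm : b ∈ Set.Icc 2 (n - 1) := by simp only [Set.mem_Icc]; omega
          rw [hfval b hbm] at heq'
          have := hdmem b hbm; omega
        · exfalso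
          rw [hbn, hDn] at heq'
          have ham : a ∈ Set.Icc 2 (n - 1) := by simp only [Set.mem_Icc]; omega
          rw [hfval a ham] at heq'
          have := hdmem a ham; omega
        · have ham : a ∈ Set.Icc 2 (n - 1) := by simp only [Set.mem_Icc]; omega
          have hbm : b ∈ Set.Icc 2 (n - 1) := by simp only [Set.mem_Icc]; omega
          rw [hfval a ham, hfval b hbm] at heq'
          exact hd.injOn ham hbm heq'
    · intro d hdm
      simp only [Set.mem_Ico] at hdm
      by_cases hd1 : d = n - 1
      · exact ⟨n, by simp only [Set.mem_Icc]; omega,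
          by show Nat.dist (f n) n = d; rw [hDn, hd1]⟩
      · by_cases hd2 : d = n - 2
        · exact ⟨1, by simp only [Set.mem_Icc]; omega,
            by show Nat.dist (f 1) 1 = d; rw [hD1, hd2]⟩
        · obtain ⟨x, hx, hDx⟩ := hd.surjOn (show d ∈ Set.Ico 0 (n - 2) by
            simp only [Set.mem_Ico]; omega)
          have hDx' : Nat.dist (g x) x = d := hDx
          refine ⟨x, ?_, ?_⟩
          · have := hx; simp only [Set.mem_Icc] at this ⊢; omega
          · show Nat.dist (f x) x = d
            rw [hfval x hx]; exact hDx'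

/-- For `n ≥ 3`, the matrix `Tₙ` is solvable iff `Tₙ**` is: there is a permutation `f` of
`{1, …, n}` with `i ↦ |f i - i|` a bijection onto `{0, …, n-1}` iff there is a bijection `g`
from `{2, …, n-1}` onto `{2, …, n} \ {n-1}` with `i ↦ |g i - i|` a bijection onto
`{0, …, n-3}`. -/
theorem toeplitz_solvable_iff_star_star_solvable (n : ℕ) (hn : 3 ≤ n) :
    (∃ f : ℕ → ℕ, Set.BijOn f (Set.Icc 1 n) (Set.Icc 1 n) ∧
      Set.BijOn (fun i => Nat.dist (f i) i) (Set.Icc 1 n) (Set.Ico 0 n)) ↔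
    (∃ g : ℕ → ℕ, Set.BijOn g (Set.Icc 2 (n - 1)) (Set.Icc 2 n \ {n - 1}) ∧
      Set.BijOn (fun i => Nat.dist (g i) i) (Set.Icc 2 (n - 1)) (Set.Ico 0 (n - 2))) := by
  constructor
  · rintro ⟨f, hb, hd⟩
    obtain ⟨F, hF, hF1, hFn⟩ := norm_sol hn ⟨hb, hd⟩
    obtain ⟨hg1, hg2⟩ := restrict_sol hn hF hF1 hFn
    exact ⟨F, hg1, hg2⟩
  · rintro ⟨g, hb, hd⟩
    obtain ⟨h1, h2⟩ := extend_sol hn hb hd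
    exact ⟨_, h1, h2⟩
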